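/- Let A be a unital C*-algebra, let D ∈ A be self-adjoint with D² ≥ ρ²·1 for some ρ > 0, let a ∈ A be arbitrary, and let κ > 0. Let L_κ = [[κD, a], [a*, −κD]] ∈ M₂(A). Then L_κ² ≥ (κ²ρ² − κ‖Da − aD‖)·1 in M₂(A). In particular, if κρ² ≥ 2‖Da − aD‖, then L_κ² ≥ (κ²ρ²/2)·1 and L_κ is invertible. -/

import Mathlib

/-!
Expanding the square gives `L_κ² = [[κ²D² + aa*, κ[D,a]], [κ[D,a]*, κ²D² + a*a]]`, whose diagonal
blocks are `≥ κ²ρ²`. A block matrix `[[p, z], [z*, q]]` with `p, q ≥ r` is `≥ r - ‖z‖`: what remains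
after removing the diagonal excess is `[[‖z‖, z], [z*, ‖z‖]]`, and writing `z = ‖z‖ w` with
`‖w‖ = 1` this is `‖z‖ (Y* Y + diag(0, 1 - w*w))` for `Y = [[1, w], [0, 0]]`.
In the C⋆-algebra `CStarMatrix (Fin 2) (Fin 2) A` positivity means being of the form `y*y`, and
`L_κ² ≥ (κ²ρ²/2)·1` makes `L_κ²`, hence `L_κ`, invertible.
-/

open Matrix

/-- The odd spectral localizer `L_κ = [[κD, a], [a*, −κD]]` as a 2×2 matrix over a
unital C*-algebra. -/
noncomputable def oddLocalizer {A : Type*} [CStarAlgebra A] (κ : ℝ) (D a : A) :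
    Matrix (Fin 2) (Fin 2) A :=
  !![κ • D, a; star a, -(κ • D)]

namespace CStarMatrix

lemma star_ofMatrix_fin_two {A : Type*} [Star A] (a b c d : A) :
    star (ofMatrix !![a, b; c, d]) = ofMatrix !![star a, star c; star b, star d] := by
  ext i j
  fin_cases i <;> fin_cases j <;> rfl

lemma ofMatrix_mul_ofMatrix_fin_two {A : Type*} [Mul A] [AddCommMonoid A]
    (a b c d e f g h : A) :
    ofMatrix !![a, b; c, d] * ofMatrix !![e, f; g, h] =
      ofMatrix !![a * e + b * g, a * f + b * h; c * e + d * g, c * f + d * h] :=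
  mul_fin_two ..

variable {A : Type*} [CStarAlgebra A] [PartialOrder A] [StarOrderedRing A]
  {n : Type*} [Fintype n] [DecidableEq n]

/- Instance search misses these two because the `ℝ`-algebra structures `CStarMatrix.instAlgebra`
and `Algebra.complexToReal` on `CStarMatrix n n A` agree only up to unfolding. -/
noncomputable instance instContinuousFunctionalCalculusIsSelfAdjoint :
    ContinuousFunctionalCalculus ℝ (CStarMatrix n n A) IsSelfAdjoint :=
  IsSelfAdjoint.instContinuousFunctionalCalculus

instance instNonnegSpectrumClassReal : NonnegSpectrumClass ℝ (CStarMatrix n n A) :=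
  CStarAlgebra.instNonnegSpectrumClass

lemma nonneg_ofMatrix_diag_fin_two {p q : A} (hp : 0 ≤ p) (hq : 0 ≤ q) :
    0 ≤ ofMatrix !![p, 0; 0, q] := by
  obtain ⟨s, rfl⟩ := CStarAlgebra.nonneg_iff_eq_star_mul_self.mp hp
  obtain ⟨t, rfl⟩ := CStarAlgebra.nonneg_iff_eq_star_mul_self.mp hq
  convert star_mul_self_nonneg (ofMatrix !![s, 0; 0, t]) using 1
  simp [star_ofMatrix_fin_two, ofMatrix_mul_ofMatrix_fin_two]

lemma nonneg_ofMatrix_fin_two_of_norm_le_one {w : A} (hw : ‖w‖ ≤ 1) :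
    0 ≤ ofMatrix !![1, w; star w, 1] := by
  have hww : star w * w ≤ 1 := by
    rw [← CStarAlgebra.norm_le_one_iff_of_nonneg _ (star_mul_self_nonneg w),
      CStarRing.norm_star_mul_self]
    exact mul_le_one₀ hw (norm_nonneg w) hw
  have split : ofMatrix !![1, w; star w, 1] =
      star (ofMatrix !![1, w; 0, 0]) * ofMatrix !![1, w; 0, 0] +
        ofMatrix !![0, 0; 0, 1 - star w * w] := by
    simp [star_ofMatrix_fin_two, ofMatrix_mul_ofMatrix_fin_two]
  rw [split]
  exact add_nonneg (star_mul_self_nonneg _)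
    (nonneg_ofMatrix_diag_fin_two le_rfl (sub_nonneg.mpr hww))

lemma nonneg_ofMatrix_fin_two_norm (z : A) :
    0 ≤ ofMatrix !![‖z‖ • 1, z; star z, ‖z‖ • 1] := by
  rcases eq_or_ne z 0 with rfl | hz
  · refine le_of_eq (ext fun i j => ?_)
    fin_cases i <;> fin_cases j <;> simp [zero_apply]
  have hnorm : 0 < ‖z‖ := norm_pos_iff.mpr hz
  have scale : ofMatrix !![‖z‖ • 1, z; star z, ‖z‖ • 1] =
      ‖z‖ • ofMatrix !![1, ‖z‖⁻¹ • z; star (‖z‖⁻¹ • z), 1] := by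
    simp [smul_smul, hnorm.ne', Matrix.smul_of]
  rw [scale]
  refine smul_nonneg hnorm.le (nonneg_ofMatrix_fin_two_of_norm_le_one ?_)
  rw [norm_smul, norm_inv, norm_norm, inv_mul_cancel₀ hnorm.ne']

lemma smul_one_le_ofMatrix_fin_two {p q z : A} {r : ℝ} (hp : r • 1 ≤ p) (hq : r • 1 ≤ q) :
    (r - ‖z‖) • 1 ≤ ofMatrix !![p, z; star z, q] := by
  have split : ofMatrix !![p, z; star z, q] - (r - ‖z‖) • 1 =
      ofMatrix !![p - r • 1, 0; 0, q - r • 1] + ofMatrix !![‖z‖ • 1, z; star z, ‖z‖ • 1] := by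
    refine ext fun i j => ?_
    fin_cases i <;> fin_cases j <;> simp [sub_smul, sub_sub_eq_add_sub, sub_add_eq_add_sub]
  rw [← sub_nonneg, split]
  exact add_nonneg (nonneg_ofMatrix_diag_fin_two (sub_nonneg.mpr hp) (sub_nonneg.mpr hq))
    (nonneg_ofMatrix_fin_two_norm z)

end CStarMatrix

lemma oddLocalizer_mul_self {A : Type*} [CStarAlgebra A] {D : A} (hD : IsSelfAdjoint D)
    (κ : ℝ) (a : A) :
    oddLocalizer κ D a * oddLocalizer κ D a =
      !![κ ^ 2 • D ^ 2 + a * star a, κ • (D * a - a * D);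
        star (κ • (D * a - a * D)), κ ^ 2 • D ^ 2 + star a * a] := by
  rw [oddLocalizer, mul_fin_two]
  simp [hD.star_eq, sq, smul_smul, sub_eq_add_neg, add_comm]

lemma smul_one_le_oddLocalizer_mul_self {A : Type*} [CStarAlgebra A] [PartialOrder A]
    [StarOrderedRing A] {D : A} (hD : IsSelfAdjoint D) {ρ : ℝ} (hD2 : ρ ^ 2 • (1 : A) ≤ D ^ 2)
    {κ : ℝ} (hκ : 0 ≤ κ) (a : A) :
    (κ ^ 2 * ρ ^ 2 - κ * ‖D * a - a * D‖) • 1 ≤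
      CStarMatrix.ofMatrix (oddLocalizer κ D a) * CStarMatrix.ofMatrix (oddLocalizer κ D a) := by
  have hκD : (κ ^ 2 * ρ ^ 2) • (1 : A) ≤ κ ^ 2 • D ^ 2 := by
    rw [mul_smul]
    exact smul_le_smul_of_nonneg_left hD2 (sq_nonneg κ)
  have hnorm : ‖κ • (D * a - a * D)‖ = κ * ‖D * a - a * D‖ := by
    rw [norm_smul, Real.norm_of_nonneg hκ]
  show _ ≤ CStarMatrix.ofMatrix (oddLocalizer κ D a * oddLocalizer κ D a)
  rw [oddLocalizer_mul_self hD, ← hnorm]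
  exact CStarMatrix.smul_one_le_ofMatrix_fin_two
    (le_add_of_le_of_nonneg hκD (mul_star_self_nonneg a))
    (le_add_of_le_of_nonneg hκD (star_mul_self_nonneg a))

/-- High-energy lower bound for the odd spectral localizer: if `D` is self-adjoint
with `D² ≥ ρ²·1`, then `L_κ² ≥ (κ²ρ² − κ‖[D,a]‖)·1` in `M₂(A)` (positivity being
expressed as being of the form `star y * y`); in particular, if
`κρ² ≥ 2‖[D,a]‖`, then `L_κ² ≥ (κ²ρ²/2)·1` and `L_κ` is invertible. -/
theorem oddLocalizer_highEnergy_sq_ge (A : Type*) [CStarAlgebra A]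
    [PartialOrder A] [StarOrderedRing A] (D a : A) (hD : IsSelfAdjoint D)
    (ρ : ℝ) (hρ : 0 < ρ) (hD2 : ρ ^ 2 • (1 : A) ≤ D ^ 2) (κ : ℝ) (hκ : 0 < κ) :
    (∃ y : Matrix (Fin 2) (Fin 2) A,
      oddLocalizer κ D a * oddLocalizer κ D a -
          ((κ ^ 2 * ρ ^ 2 - κ * ‖D * a - a * D‖) • (1 : Matrix (Fin 2) (Fin 2) A)) =
        star y * y) ∧
    (2 * ‖D * a - a * D‖ ≤ κ * ρ ^ 2 →
      (∃ y : Matrix (Fin 2) (Fin 2) A,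
        oddLocalizer κ D a * oddLocalizer κ D a -
            ((κ ^ 2 * ρ ^ 2 / 2) • (1 : Matrix (Fin 2) (Fin 2) A)) =
          star y * y) ∧
      IsUnit (oddLocalizer κ D a)) := by
  set L := CStarMatrix.ofMatrix (oddLocalizer κ D a)
  have factor (c : ℝ) (h : c • 1 ≤ L * L) : ∃ y, L * L - c • 1 = star y * y :=
    CStarAlgebra.nonneg_iff_eq_star_mul_self.mp (sub_nonneg.mpr h)
  have hLL := smul_one_le_oddLocalizer_mul_self hD hD2 hκ.le a
  refine ⟨factor _ hLL, fun hsmall => ?_⟩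
  have hhalf : (κ ^ 2 * ρ ^ 2 / 2) • (1 : CStarMatrix (Fin 2) (Fin 2) A) ≤ L * L :=
    (smul_le_smul_of_nonneg_right (by nlinarith) zero_le_one).trans hLL
  have hpos : IsStrictlyPositive ((κ ^ 2 * ρ ^ 2 / 2) • (1 : CStarMatrix (Fin 2) (Fin 2) A)) :=
    .smul (by positivity) isStrictlyPositive_one
  exact ⟨factor _ hhalf, isUnit_mul_self_iff.mp (CStarAlgebra.isUnit_of_le _ hhalf hpos)⟩
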